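/- Let H be an ordered hypersemigroup. Every ideal of H is prime if and only if the ideals of H form a chain under inclusion and H is intra-regular. -/
import Mathlib

set_option linter.unusedSectionVars false
set_option linter.unusedVariables false


variable {H : Type*}

/-- Subset product induced by a hyperoperation. -/
def hprod (m : H → H → Set H) (A B : Set H) : Set H :=
  ⋃ a ∈ A, ⋃ b ∈ B, m a b

/-- Downward closure (X]. -/
def dcl [LE H] (X : Set H) : Set H := {t | ∃ x ∈ X, t ≤ x}

/-- Right ideal of an ordered hypergroupoid. -/
def IsRightIdeal [LE H] (m : H → H → Set H) (A : Set H) : Prop :=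
  A.Nonempty ∧ hprod m A Set.univ ⊆ A ∧ dcl A = A

/-- Left ideal of an ordered hypergroupoid. -/
def IsLeftIdeal [LE H] (m : H → H → Set H) (A : Set H) : Prop :=
  A.Nonempty ∧ hprod m Set.univ A ⊆ A ∧ dcl A = A

/-- (Two-sided) ideal of an ordered hypergroupoid. -/
def IsIdeal [LE H] (m : H → H → Set H) (A : Set H) : Prop :=
  A.Nonempty ∧ hprod m A Set.univ ⊆ A ∧ hprod m Set.univ A ⊆ A ∧ dcl A = A

section Helpers
variable [PartialOrder H] {m : H → H → Set H}

lemma mem_hprod {A B : Set H} {t : H} :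
    t ∈ hprod m A B ↔ ∃ a ∈ A, ∃ b ∈ B, t ∈ m a b := by
  simp [hprod]

lemma hprod_mono {A A' B B' : Set H} (hA : A ⊆ A') (hB : B ⊆ B') :
    hprod m A B ⊆ hprod m A' B' := by
  intro t ht
  rw [mem_hprod] at ht ⊢
  obtain ⟨a, ha, b, hb, h⟩ := ht
  exact ⟨a, hA ha, b, hB hb, h⟩

lemma subset_dcl {X : Set H} : X ⊆ dcl X := fun x hx => ⟨x, hx, le_refl x⟩

lemma dcl_mono {X Y : Set H} (h : X ⊆ Y) : dcl X ⊆ dcl Y :=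
  fun t ⟨x, hx, hle⟩ => ⟨x, h hx, hle⟩

lemma dcl_dcl {X : Set H} : dcl (dcl X) = dcl X := by
  apply Set.Subset.antisymm
  · rintro t ⟨x, ⟨y, hy, h1⟩, h2⟩
    exact ⟨y, hy, h2.trans h1⟩
  · exact subset_dcl

lemma dle_trans {A B C : Set H} (h1 : A ⊆ dcl B) (h2 : B ⊆ dcl C) : A ⊆ dcl C :=
  h1.trans ((dcl_mono h2).trans dcl_dcl.subset)

lemma dle_of_subset {A B : Set H} (h : A ⊆ B) : A ⊆ dcl B := h.trans subset_dcl

variable (hcomp : ∀ a b c : H, a ≤ b →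
      dcl (m a c) ⊆ dcl (m b c) ∧ dcl (m c a) ⊆ dcl (m c b))

include hcomp

lemma hprod_dcl_subset {A B : Set H} :
    hprod m (dcl A) (dcl B) ⊆ dcl (hprod m A B) := by
  intro t ht
  obtain ⟨a', ⟨a, ha, haa⟩, b', ⟨b, hb, hbb⟩, h⟩ := mem_hprod.mp ht
  have h1 : t ∈ dcl (m a b) := (hcomp b' b a hbb).2 ((hcomp a' a b' haa).1 (subset_dcl h))
  obtain ⟨x, hx, hle⟩ := h1
  exact ⟨x, mem_hprod.mpr ⟨a, ha, b, hb, hx⟩, hle⟩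

lemma dle_congr {A A' B B' : Set H} (hA : A ⊆ dcl A') (hB : B ⊆ dcl B') :
    hprod m A B ⊆ dcl (hprod m A' B') :=
  (hprod_mono hA hB).trans (hprod_dcl_subset hcomp)

lemma dle_left {A A' B : Set H} (hA : A ⊆ dcl A') :
    hprod m A B ⊆ dcl (hprod m A' B) :=
  dle_congr hcomp hA subset_dcl

lemma dle_right {A B B' : Set H} (hB : B ⊆ dcl B') :
    hprod m A B ⊆ dcl (hprod m A B') :=
  dle_congr hcomp subset_dcl hB

omit hcomp in
lemma hprod_union_left {A B C : Set H} :
    hprod m (A ∪ B) C = hprod m A C ∪ hprod m B C := by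
  rw [hprod, Set.biUnion_union]; rfl

omit hcomp in
lemma hprod_union_right {A B C : Set H} :
    hprod m A (B ∪ C) = hprod m A B ∪ hprod m A C := by
  ext t
  simp only [mem_hprod, Set.mem_union]
  constructor
  · rintro ⟨a, ha, b, hb | hb, h⟩
    · exact Or.inl ⟨a, ha, b, hb, h⟩
    · exact Or.inr ⟨a, ha, b, hb, h⟩
  · rintro (⟨a, ha, b, hb, h⟩ | ⟨a, ha, b, hb, h⟩)
    · exact ⟨a, ha, b, Or.inl hb, h⟩
    · exact ⟨a, ha, b, Or.inr hb, h⟩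

end Helpers
section Main
variable [PartialOrder H] {m : H → H → Set H}
variable (hcomp : ∀ a b c : H, a ≤ b →
      dcl (m a c) ⊆ dcl (m b c) ∧ dcl (m c a) ⊆ dcl (m c b))
variable (hassoc : ∀ A B C : Set H,
      hprod m (hprod m A B) C = hprod m A (hprod m B C))

lemma hprod_nonempty (hne : ∀ a b : H, (m a b).Nonempty) {A B : Set H}
    (hA : A.Nonempty) (hB : B.Nonempty) : (hprod m A B).Nonempty := by
  obtain ⟨a, ha⟩ := hA
  obtain ⟨b, hb⟩ := hB
  obtain ⟨t, ht⟩ := hne a b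
  exact ⟨t, mem_hprod.mpr ⟨a, ha, b, hb, ht⟩⟩

include hassoc

lemma sandR {X B : Set H} :
    hprod m (hprod m (hprod m Set.univ X) Set.univ) B
      ⊆ hprod m (hprod m Set.univ X) Set.univ := by
  rw [hassoc]
  exact hprod_mono subset_rfl (Set.subset_univ _)

lemma sandL {X A : Set H} :
    hprod m A (hprod m (hprod m Set.univ X) Set.univ)
      ⊆ hprod m (hprod m Set.univ X) Set.univ := by
  have e : hprod m A (hprod m (hprod m Set.univ X) Set.univ)
      = hprod m (hprod m (hprod m A Set.univ) X) Set.univ := by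
    simp only [hassoc]
  rw [e]
  exact hprod_mono (hprod_mono (Set.subset_univ _) subset_rfl) subset_rfl

include hcomp

lemma K_ideal (hne : ∀ a b : H, (m a b).Nonempty) {X : Set H} (hX : X.Nonempty) :
    IsIdeal m (dcl (hprod m (hprod m Set.univ X) Set.univ)) := by
  refine ⟨?_, ?_, ?_, dcl_dcl⟩
  · exact ((hprod_nonempty hne (hprod_nonempty hne ⟨_, Set.mem_univ hX.some⟩ hX)
      ⟨_, Set.mem_univ hX.some⟩).mono subset_dcl)
  · exact (dle_left hcomp subset_rfl).trans (dcl_mono (sandR hassoc))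
  · exact (dle_right hcomp subset_rfl).trans (dcl_mono (sandL hassoc))

omit hcomp hassoc in
lemma absorb {T : Set H} (hT : IsIdeal m T) :
    dcl (hprod m (hprod m Set.univ T) Set.univ) ⊆ T := by
  have h1 : hprod m (hprod m Set.univ T) Set.univ ⊆ T :=
    (hprod_mono hT.2.2.1 subset_rfl).trans hT.2.1
  exact (dcl_mono h1).trans hT.2.2.2.subset

lemma core
    (hintra : ∀ a : H, a ∈ dcl (hprod m (hprod m (hprod m Set.univ {a}) {a}) Set.univ))
    (a b c : H)
    (hc : ({c} : Set H) ⊆ dcl (hprod m (hprod m Set.univ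
        (hprod m (hprod m {b} Set.univ) {a})) Set.univ)) :
    ({c} : Set H) ⊆ dcl (hprod m (hprod m Set.univ (hprod m {a} {b})) Set.univ) := by
  have hY : hprod m (hprod m {b} Set.univ) {a}
      ⊆ dcl (hprod m (hprod m Set.univ (hprod m {a} {b})) Set.univ) := by
    intro t ht
    have h2 : hprod m (hprod m (hprod m Set.univ {t}) {t}) Set.univ
        ⊆ hprod m (hprod m (hprod m Set.univ (hprod m (hprod m {b} Set.univ) {a}))
            (hprod m (hprod m {b} Set.univ) {a})) Set.univ := by
      have hs : ({t} : Set H) ⊆ hprod m (hprod m {b} Set.univ) {a} :=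
        Set.singleton_subset_iff.mpr ht
      exact hprod_mono (hprod_mono (hprod_mono subset_rfl hs) hs) subset_rfl
    have e1 : hprod m (hprod m (hprod m Set.univ (hprod m (hprod m {b} Set.univ) {a}))
            (hprod m (hprod m {b} Set.univ) {a})) Set.univ
        = hprod m (hprod m (hprod m Set.univ {b}) Set.univ)
            (hprod m {a} (hprod m {b} (hprod m Set.univ (hprod m {a} Set.univ)))) := by
      simp only [hassoc]
    have e2 : hprod m Set.univ (hprod m {a} (hprod m {b} Set.univ))
        = hprod m (hprod m Set.univ (hprod m {a} {b})) Set.univ := by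
      simp only [hassoc]
    have h3 : hprod m (hprod m (hprod m Set.univ (hprod m (hprod m {b} Set.univ) {a}))
            (hprod m (hprod m {b} Set.univ) {a})) Set.univ
        ⊆ hprod m (hprod m Set.univ (hprod m {a} {b})) Set.univ := by
      rw [e1, ← e2]
      exact hprod_mono (Set.subset_univ _)
        (hprod_mono subset_rfl (hprod_mono subset_rfl (Set.subset_univ _)))
    exact dcl_mono (h2.trans h3) (hintra t)
  have h4 : hprod m (hprod m Set.univ (hprod m (hprod m {b} Set.univ) {a})) Set.univ
      ⊆ dcl (hprod m (hprod m Set.univ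
          (hprod m (hprod m Set.univ (hprod m {a} {b})) Set.univ)) Set.univ) :=
    dle_left hcomp (dle_right hcomp hY)
  have h5 : hprod m (hprod m Set.univ
        (hprod m (hprod m Set.univ (hprod m {a} {b})) Set.univ)) Set.univ
      ⊆ hprod m (hprod m Set.univ (hprod m {a} {b})) Set.univ :=
    (hprod_mono (sandL hassoc) subset_rfl).trans (sandR hassoc)
  exact dle_trans hc (dle_trans h4 (dle_of_subset h5))

end Main



theorem stmt12 [PartialOrder H] (m : H → H → Set H)
    (hne : ∀ a b : H, (m a b).Nonempty)
    (hcomp : ∀ a b c : H, a ≤ b →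
      dcl (m a c) ⊆ dcl (m b c) ∧ dcl (m c a) ⊆ dcl (m c b))
    (hassoc : ∀ A B C : Set H,
      hprod m (hprod m A B) C = hprod m A (hprod m B C)) :
    (∀ T : Set H, IsIdeal m T →
      ∀ A B : Set H, A.Nonempty → B.Nonempty → hprod m A B ⊆ T → A ⊆ T ∨ B ⊆ T) ↔
    ((∀ A B : Set H, IsIdeal m A → IsIdeal m B → A ⊆ B ∨ B ⊆ A) ∧
     (∀ a : H, a ∈ dcl (hprod m (hprod m (hprod m Set.univ {a}) {a}) Set.univ))) := by
  constructor
  · intro hprime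
    constructor
    · -- chain
      intro A B hA hB
      obtain ⟨⟨a, ha⟩, hAr, hAl, hAd⟩ := hA
      obtain ⟨⟨b, hb⟩, hBr, hBl, hBd⟩ := hB
      have hABsub : hprod m A B ⊆ A ∩ B :=
        Set.subset_inter ((hprod_mono subset_rfl (Set.subset_univ B)).trans hAr)
          ((hprod_mono (Set.subset_univ A) subset_rfl).trans hBl)
      have hne' : (A ∩ B).Nonempty := by
        obtain ⟨t, ht⟩ := hne a b
        exact ⟨t, hABsub (mem_hprod.mpr ⟨a, ha, b, hb, ht⟩)⟩
      have hint : IsIdeal m (A ∩ B) := by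
        refine ⟨hne', ?_, ?_, ?_⟩
        · exact Set.subset_inter
            ((hprod_mono Set.inter_subset_left subset_rfl).trans hAr)
            ((hprod_mono Set.inter_subset_right subset_rfl).trans hBr)
        · exact Set.subset_inter
            ((hprod_mono subset_rfl Set.inter_subset_left).trans hAl)
            ((hprod_mono subset_rfl Set.inter_subset_right).trans hBl)
        · refine Set.Subset.antisymm ?_ subset_dcl
          exact Set.subset_inter ((dcl_mono Set.inter_subset_left).trans hAd.subset)
            ((dcl_mono Set.inter_subset_right).trans hBd.subset)
      rcases hprime (A ∩ B) hint A B ⟨a, ha⟩ ⟨b, hb⟩ hABsub with h | h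
      · exact Or.inl (fun x hx => (h hx).2)
      · exact Or.inr (fun x hx => (h hx).1)
    · -- intra-regular
      intro a
      have hbig : IsIdeal m (dcl (hprod m {a} {a} ∪
          hprod m Set.univ (hprod m {a} {a}) ∪
          hprod m (hprod m {a} {a}) Set.univ ∪
          hprod m Set.univ (hprod m (hprod m {a} {a}) Set.univ))) := by
        refine ⟨?_, ?_, ?_, dcl_dcl⟩
        · obtain ⟨t, ht⟩ := hprod_nonempty hne (Set.singleton_nonempty a)
            (Set.singleton_nonempty a)
          exact ⟨t, subset_dcl (Or.inl (Or.inl (Or.inl ht)))⟩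
        · refine (dle_left hcomp subset_rfl).trans (dcl_mono ?_)
          rw [hprod_union_left, hprod_union_left, hprod_union_left]
          refine Set.union_subset (Set.union_subset (Set.union_subset ?_ ?_) ?_) ?_
          · exact fun x hx => Or.inl (Or.inr hx)
          · rw [hassoc]
            exact fun x hx => Or.inr hx
          · rw [hassoc]
            exact fun x hx => Or.inl (Or.inr
              (hprod_mono subset_rfl (Set.subset_univ _) hx))
          · rw [hassoc]
            exact fun x hx => Or.inr
              (hprod_mono subset_rfl
                ((by rw [hassoc] : hprod m (hprod m (hprod m {a} {a}) Set.univ) Set.univ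
                    = hprod m (hprod m {a} {a}) (hprod m Set.univ Set.univ)).subset.trans
                  (hprod_mono subset_rfl (Set.subset_univ _))) hx)
        · refine (dle_right hcomp subset_rfl).trans (dcl_mono ?_)
          rw [hprod_union_right, hprod_union_right, hprod_union_right]
          refine Set.union_subset (Set.union_subset (Set.union_subset ?_ ?_) ?_) ?_
          · exact fun x hx => Or.inl (Or.inl (Or.inr hx))
          · rw [← hassoc]
            exact fun x hx => Or.inl (Or.inl (Or.inr
              (hprod_mono (Set.subset_univ _) subset_rfl hx)))
          · exact fun x hx => Or.inr hx
          · rw [← hassoc]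
            exact fun x hx => Or.inr
              (hprod_mono (Set.subset_univ _) subset_rfl hx)
      have hsub : hprod m {a} {a} ⊆ dcl (hprod m {a} {a} ∪
          hprod m Set.univ (hprod m {a} {a}) ∪
          hprod m (hprod m {a} {a}) Set.univ ∪
          hprod m Set.univ (hprod m (hprod m {a} {a}) Set.univ)) :=
        fun x hx => subset_dcl (Or.inl (Or.inl (Or.inl hx)))
      have hmem : a ∈ dcl (hprod m {a} {a} ∪
          hprod m Set.univ (hprod m {a} {a}) ∪
          hprod m (hprod m {a} {a}) Set.univ ∪
          hprod m Set.univ (hprod m (hprod m {a} {a}) Set.univ)) := by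
        rcases hprime _ hbig {a} {a} (Set.singleton_nonempty a)
          (Set.singleton_nonempty a) hsub with h | h
        · exact h rfl
        · exact h rfl
      obtain ⟨w, hw, hle⟩ := hmem
      have egoal : hprod m (hprod m (hprod m Set.univ {a}) {a}) Set.univ
          = hprod m (hprod m Set.univ (hprod m {a} {a})) Set.univ := by
        simp only [hassoc]
      rw [egoal]
      have e3 : hprod m Set.univ (hprod m (hprod m {a} {a}) Set.univ)
          = hprod m (hprod m Set.univ (hprod m {a} {a})) Set.univ := (hassoc _ _ _).symm
      suffices hgoal : ({a} : Set H) ⊆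
          dcl (hprod m (hprod m Set.univ (hprod m {a} {a})) Set.univ) by
        exact hgoal rfl
      rcases hw with ((hw | hw) | hw) | hw
      · -- w ∈ aa
        have h0 : ({a} : Set H) ⊆ dcl (hprod m {a} {a}) :=
          Set.singleton_subset_iff.mpr ⟨w, hw, hle⟩
        have h1 : hprod m {a} {a} ⊆ dcl (hprod m (hprod m {a} {a}) (hprod m {a} {a})) :=
          dle_congr hcomp h0 h0
        have e1 : hprod m (hprod m {a} {a}) (hprod m {a} {a})
            = hprod m (hprod m {a} (hprod m {a} {a})) {a} := by
          simp only [hassoc]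
        have h3 : dcl (hprod m (hprod m {a} {a}) (hprod m {a} {a}))
            ⊆ dcl (hprod m (hprod m Set.univ (hprod m {a} {a})) Set.univ) := by
          rw [e1]
          exact dcl_mono (hprod_mono (hprod_mono (Set.subset_univ _) subset_rfl)
            (Set.subset_univ _))
        exact dle_trans h0 (h1.trans h3)
      · -- w ∈ U·aa
        have h0 : ({a} : Set H) ⊆ dcl (hprod m Set.univ (hprod m {a} {a})) :=
          Set.singleton_subset_iff.mpr ⟨w, hw, hle⟩
        have h1 : hprod m {a} {a}
            ⊆ dcl (hprod m (hprod m Set.univ (hprod m {a} {a})) {a}) :=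
          dle_left hcomp h0
        have h2 : hprod m Set.univ (hprod m {a} {a})
            ⊆ dcl (hprod m Set.univ (hprod m (hprod m Set.univ (hprod m {a} {a})) {a})) :=
          dle_right hcomp h1
        have e2 : hprod m Set.univ (hprod m (hprod m Set.univ (hprod m {a} {a})) {a})
            = hprod m (hprod m Set.univ Set.univ) (hprod m (hprod m {a} {a}) {a}) := by
          simp only [hassoc]
        have h4 : hprod m Set.univ (hprod m (hprod m Set.univ (hprod m {a} {a})) {a})
            ⊆ hprod m (hprod m Set.univ (hprod m {a} {a})) Set.univ := by
          rw [e2, ← e3]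
          exact hprod_mono (Set.subset_univ _)
            (hprod_mono subset_rfl (Set.subset_univ _))
        exact dle_trans h0 (dle_trans h2 (dle_of_subset h4))
      · -- w ∈ aa·U
        have h0 : ({a} : Set H) ⊆ dcl (hprod m (hprod m {a} {a}) Set.univ) :=
          Set.singleton_subset_iff.mpr ⟨w, hw, hle⟩
        have h1 : hprod m {a} {a}
            ⊆ dcl (hprod m {a} (hprod m (hprod m {a} {a}) Set.univ)) :=
          dle_right hcomp h0
        have h2 : hprod m (hprod m {a} {a}) Set.univ
            ⊆ dcl (hprod m (hprod m {a} (hprod m (hprod m {a} {a}) Set.univ)) Set.univ) :=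
          dle_left hcomp h1
        have e2 : hprod m (hprod m {a} (hprod m (hprod m {a} {a}) Set.univ)) Set.univ
            = hprod m {a} (hprod m (hprod m {a} {a}) (hprod m Set.univ Set.univ)) := by
          simp only [hassoc]
        have h4 : hprod m (hprod m {a} (hprod m (hprod m {a} {a}) Set.univ)) Set.univ
            ⊆ hprod m (hprod m Set.univ (hprod m {a} {a})) Set.univ := by
          rw [e2, ← e3]
          exact hprod_mono (Set.subset_univ _)
            (hprod_mono subset_rfl (Set.subset_univ _))
        exact dle_trans h0 (dle_trans h2 (dle_of_subset h4))
      · -- w ∈ U·aa·U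
        have h0 : ({a} : Set H) ⊆
            dcl (hprod m Set.univ (hprod m (hprod m {a} {a}) Set.univ)) :=
          Set.singleton_subset_iff.mpr ⟨w, hw, hle⟩
        rw [← e3]
        exact h0
  · rintro ⟨hchain, hintra⟩ T hT A B hA hB hAB
    by_cases hAT : A ⊆ T
    · exact Or.inl hAT
    right
    obtain ⟨a0, ha0A, ha0T⟩ := Set.not_subset.mp hAT
    intro b0 hb0
    have hab : hprod m {a0} {b0} ⊆ T :=
      (hprod_mono (Set.singleton_subset_iff.mpr ha0A)
        (Set.singleton_subset_iff.mpr hb0)).trans hAB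
    have hKa := K_ideal hcomp hassoc hne (Set.singleton_nonempty a0)
    have hKb := K_ideal hcomp hassoc hne (Set.singleton_nonempty b0)
    have hmemK : ∀ x : H, x ∈ dcl (hprod m (hprod m Set.univ {x}) Set.univ) := by
      intro x
      refine dcl_mono ?_ (hintra x)
      exact hprod_mono (hprod_mono (Set.subset_univ _) subset_rfl) subset_rfl
    have habsorb : dcl (hprod m (hprod m Set.univ (hprod m {a0} {b0})) Set.univ) ⊆ T :=
      (dcl_mono (hprod_mono (hprod_mono subset_rfl hab) subset_rfl)).trans (absorb hT)
    rcases hchain _ _ hKa hKb with hc | hc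
    · exfalso
      apply ha0T
      have h0 : ({a0} : Set H) ⊆ dcl (hprod m (hprod m Set.univ {b0}) Set.univ) :=
        Set.singleton_subset_iff.mpr (hc (hmemK a0))
      have h1 : ({a0} : Set H) ⊆
          dcl (hprod m (hprod m (hprod m Set.univ {a0}) {a0}) Set.univ) :=
        Set.singleton_subset_iff.mpr (hintra a0)
      have h2 : hprod m Set.univ {a0}
          ⊆ dcl (hprod m Set.univ (hprod m (hprod m Set.univ {b0}) Set.univ)) :=
        dle_right hcomp h0
      have h3 : hprod m (hprod m Set.univ {a0}) {a0}
          ⊆ dcl (hprod m (hprod m Set.univ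
              (hprod m (hprod m Set.univ {b0}) Set.univ)) {a0}) :=
        dle_left hcomp h2
      have h4 : hprod m (hprod m (hprod m Set.univ {a0}) {a0}) Set.univ
          ⊆ dcl (hprod m (hprod m (hprod m Set.univ
              (hprod m (hprod m Set.univ {b0}) Set.univ)) {a0}) Set.univ) :=
        dle_left hcomp h3
      have e : hprod m (hprod m (hprod m Set.univ
            (hprod m (hprod m Set.univ {b0}) Set.univ)) {a0}) Set.univ
          = hprod m (hprod m (hprod m Set.univ Set.univ)
              (hprod m (hprod m {b0} Set.univ) {a0})) Set.univ := by
        simp only [hassoc]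
      have h5 : hprod m (hprod m (hprod m Set.univ Set.univ)
            (hprod m (hprod m {b0} Set.univ) {a0})) Set.univ
          ⊆ hprod m (hprod m Set.univ (hprod m (hprod m {b0} Set.univ) {a0})) Set.univ :=
        hprod_mono (hprod_mono (Set.subset_univ _) subset_rfl) subset_rfl
      have hY : ({a0} : Set H) ⊆
          dcl (hprod m (hprod m Set.univ (hprod m (hprod m {b0} Set.univ) {a0})) Set.univ) :=
        dle_trans h1 (h4.trans (by rw [e]; exact dcl_mono h5))
      exact habsorb (core hcomp hassoc hintra a0 b0 a0 hY rfl)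
    · have h0 : ({b0} : Set H) ⊆ dcl (hprod m (hprod m Set.univ {a0}) Set.univ) :=
        Set.singleton_subset_iff.mpr (hc (hmemK b0))
      have h1 : ({b0} : Set H) ⊆
          dcl (hprod m (hprod m (hprod m Set.univ {b0}) {b0}) Set.univ) :=
        Set.singleton_subset_iff.mpr (hintra b0)
      have h2 : hprod m (hprod m Set.univ {b0}) {b0}
          ⊆ dcl (hprod m (hprod m Set.univ {b0})
              (hprod m (hprod m Set.univ {a0}) Set.univ)) :=
        dle_right hcomp h0
      have h3 : hprod m (hprod m (hprod m Set.univ {b0}) {b0}) Set.univ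
          ⊆ dcl (hprod m (hprod m (hprod m Set.univ {b0})
              (hprod m (hprod m Set.univ {a0}) Set.univ)) Set.univ) :=
        dle_left hcomp h2
      have e : hprod m (hprod m (hprod m Set.univ {b0})
            (hprod m (hprod m Set.univ {a0}) Set.univ)) Set.univ
          = hprod m (hprod m Set.univ (hprod m (hprod m {b0} Set.univ) {a0}))
              (hprod m Set.univ Set.univ) := by
        simp only [hassoc]
      have h5 : hprod m (hprod m Set.univ (hprod m (hprod m {b0} Set.univ) {a0}))
            (hprod m Set.univ Set.univ)
          ⊆ hprod m (hprod m Set.univ (hprod m (hprod m {b0} Set.univ) {a0})) Set.univ :=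
        hprod_mono subset_rfl (Set.subset_univ _)
      have hY : ({b0} : Set H) ⊆
          dcl (hprod m (hprod m Set.univ (hprod m (hprod m {b0} Set.univ) {a0})) Set.univ) :=
        dle_trans h1 (h3.trans (by rw [e]; exact dcl_mono h5))
      exact habsorb (core hcomp hassoc hintra a0 b0 b0 hY rfl)
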